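/- Let A be a commutative ring, J an ideal, and E a Z/2-graded A-module with filtration E_(p) = J^p • E₀ + J^(p-1) • E₁. Let D : E → E be a quasi-derivation over a derivation Γ of A such that D(E_(r)) ⊆ E_(r+p) and Γ(J^s) ⊆ J^(s+q) for all r, s, with p, q ≥ 2. If J^(m+1) = 0, then D is nilpotent: D^N = 0 for N large enough (e.g. N > (m+2)/2). -/

import Mathlib

/-! Iterating `D` pushes a vector `k` steps of size `p` up the filtration, and the filtration
vanishes from index `m + 2` on because `J ^ (m + 1) = 0`; as `p ≥ 2`, `N * p ≥ 2 * N ≥ m + 2`. -/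

theorem iterate_mem_add_mul {E : Type*} {F : ℕ → Set E} {D : E → E} {p : ℕ}
    (hD : ∀ r, ∀ v ∈ F r, D v ∈ F (r + p)) {r : ℕ} {v : E} (hv : v ∈ F r) (k : ℕ) :
    D^[k] v ∈ F (r + k * p) := by
  induction k with
  | zero => simpa using hv
  | succ k ih =>
    rw [Function.iterate_succ_apply', Nat.succ_mul, ← add_assoc]
    exact hD _ _ ih

theorem Submodule.pow_add_one_smul_sup_pow_smul_eq_bot {A E : Type*} [CommSemiring A]
    [AddCommMonoid E] [Module A E] {J : Ideal A} {m : ℕ} (hJ : J ^ (m + 1) = ⊥)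
    (E0 E1 : Submodule A E) {r : ℕ} (hr : m + 1 ≤ r) :
    J ^ (r + 1) • E0 ⊔ J ^ r • E1 = ⊥ := by
  have hJr : J ^ r = ⊥ := pow_eq_zero_of_le hr hJ
  have hJr1 : J ^ (r + 1) = ⊥ := pow_eq_zero_of_le (by omega) hJ
  rw [hJr, hJr1, Submodule.bot_smul, Submodule.bot_smul, sup_bot_eq]

theorem filtered_quasiDerivation_nilpotent_general {A : Type*} [CommRing A]
    (J : Ideal A) (m : ℕ) (hJ : J ^ (m + 1) = ⊥)
    {E : Type*} [AddCommGroup E] [Module A E]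
    (E0 E1 : Submodule A E)
    (F : ℕ → Submodule A E)
    (hF0 : F 0 = ⊤)
    (hF : ∀ r : ℕ, F (r + 1) = J ^ (r + 1) • E0 ⊔ J ^ r • E1)
    (p : ℕ) (hp : 2 ≤ p)
    (D : E → E)
    (hDF : ∀ r : ℕ, ∀ v ∈ F r, D v ∈ F (r + p)) :
    ∀ N : ℕ, m + 2 ≤ 2 * N → ∀ v : E, D^[N] v = 0 := by
  intro N hN v
  have hNp : m + 2 ≤ N * p := hN.trans (mul_comm 2 N ▸ Nat.mul_le_mul_left N hp)
  obtain ⟨s, hs⟩ : ∃ s, N * p = s + 1 := ⟨N * p - 1, by omega⟩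
  have hvanish : F (N * p) = ⊥ := by
    rw [hs, hF]
    exact Submodule.pow_add_one_smul_sup_pow_smul_eq_bot hJ E0 E1 (by omega)
  have hmem : D^[N] v ∈ F (0 + N * p) :=
    iterate_mem_add_mul (F := fun r => (F r : Set E)) hDF (hF0 ▸ Submodule.mem_top) N
  rwa [zero_add, hvanish, Submodule.mem_bot] at hmem

/-- A quasi-derivation `D` over `Γ` raising the filtration
`E_(r) = J^r • E₀ + J^(r-1) • E₁` by `p ≥ 2` (with `Γ(J^s) ⊆ J^(s+q)`, `q ≥ 2`)
is nilpotent when `J^(m+1) = 0`: `D^N = 0` as soon as `m + 2 ≤ 2N`. -/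
theorem filtered_quasiDerivation_nilpotent {A : Type*} [CommRing A]
    (J : Ideal A) (m : ℕ) (hJ : J ^ (m + 1) = ⊥)
    {E : Type*} [AddCommGroup E] [Module A E]
    (E0 E1 : Submodule A E) (hgrading : E0 ⊔ E1 = ⊤)
    (F : ℕ → Submodule A E)
    (hF0 : F 0 = ⊤)
    (hF : ∀ r : ℕ, F (r + 1) = J ^ (r + 1) • E0 ⊔ J ^ r • E1)
    (p q : ℕ) (hp : 2 ≤ p) (hq : 2 ≤ q)
    (Γ : A → A) (D : E → E)
    (hΓadd : ∀ a b : A, Γ (a + b) = Γ a + Γ b)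
    (hΓmul : ∀ a b : A, Γ (a * b) = Γ a * b + a * Γ b)
    (hDadd : ∀ u v : E, D (u + v) = D u + D v)
    (hD : ∀ (f : A) (v : E), D (f • v) = Γ f • v + f • D v)
    (hDF : ∀ r : ℕ, ∀ v ∈ F r, D v ∈ F (r + p))
    (hΓJ : ∀ s : ℕ, ∀ a ∈ J ^ s, Γ a ∈ J ^ (s + q)) :
    ∀ N : ℕ, m + 2 ≤ 2 * N → ∀ v : E, D^[N] v = 0 :=
  filtered_quasiDerivation_nilpotent_general J m hJ E0 E1 F hF0 hF p hp D hDF
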